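/- arXiv:0802.4300 — 6 statements merged into one kernel-verified Lean document; each statement's English description precedes it below -/
import Mathlib

section
/- Let p ∈ k[X] be a polynomial, and let x, y denote the two generators of the free associative algebra Ass_2. Then Tr(p(x)) − Tr(p(x+y)) + Tr(p(y)) = 0 in tr_2 if and only if p = a·X for some a ∈ k (i.e., p is a scalar multiple of the identity polynomial X). Hence the kernel of the differential δ: tr_1 → tr_2 is one-dimensional, spanned by Tr(x). -/
noncomputable section

/-- The span of all commutators `a*b - b*a` in the free associative algebra on `n` generators. -/
def commSpan (k : Type) [Field k] (n : ℕ) : Submodule k (FreeAlgebra k (Fin n)) :=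
  Submodule.span k {z : FreeAlgebra k (Fin n) | ∃ a b : FreeAlgebra k (Fin n), z = a * b - b * a}

/-- `tr_n`: the quotient of the free associative algebra by the span of commutators. -/
abbrev tr (k : Type) [Field k] (n : ℕ) : Type := FreeAlgebra k (Fin n) ⧸ commSpan k n

/-- The natural projection `Tr : Ass_n → tr_n`. -/
def Tr (k : Type) [Field k] (n : ℕ) : FreeAlgebra k (Fin n) →ₗ[k] tr k n :=
  (commSpan k n).mkQ

open Polynomial

/-- For a polynomial `p`, `Tr(p(x)) − Tr(p(x+y)) + Tr(p(y)) = 0` in `tr_2` iff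
`p` is a scalar multiple of `X`.  Hence `ker (δ : tr_1 → tr_2)` is spanned by `Tr(x)`. -/
theorem kernel_of_delta_tr1 (k : Type) [Field k] [CharZero k] (p : Polynomial k) :
    (Tr k 2 (Polynomial.aeval (FreeAlgebra.ι k (0 : Fin 2)) p)
      - Tr k 2 (Polynomial.aeval (FreeAlgebra.ι k (0 : Fin 2) + FreeAlgebra.ι k (1 : Fin 2)) p)
      + Tr k 2 (Polynomial.aeval (FreeAlgebra.ι k (1 : Fin 2)) p) = 0)
    ↔ ∃ a : k, p = Polynomial.C a * Polynomial.X := by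
  set x := FreeAlgebra.ι k (0 : Fin 2) with hx
  set y := FreeAlgebra.ι k (1 : Fin 2) with hy
  constructor
  · intro h
    have hE : (aeval x p - aeval (x + y) p + aeval y p) ∈ commSpan k 2 := by
      rw [← Submodule.Quotient.mk_eq_zero]
      simpa [Tr, Submodule.mkQ_apply, map_sub, map_add] using h
    let φ : FreeAlgebra k (Fin 2) →ₐ[k] MvPolynomial (Fin 2) k :=
      FreeAlgebra.lift k (fun i => MvPolynomial.X i)
    have hφ : ∀ z ∈ commSpan k 2, φ z = 0 := by
      intro z hz
      refine Submodule.span_induction ?_ ?_ ?_ ?_ hz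
      · rintro z ⟨a, b, rfl⟩
        simp [map_sub, map_mul, mul_comm]
      · simp
      · intro a b _ _ ha hb; simp [map_add, ha, hb]
      · intro c a _ ha; simp [map_smul, ha]
    have hM : aeval (MvPolynomial.X 0 : MvPolynomial (Fin 2) k) p
        - aeval ((MvPolynomial.X 0 : MvPolynomial (Fin 2) k) + MvPolynomial.X 1) p
        + aeval (MvPolynomial.X 1 : MvPolynomial (Fin 2) k) p = 0 := by
      have h1 := hφ _ hE
      have e0 : φ x = MvPolynomial.X 0 := by simp [φ, hx]
      have e1 : φ y = MvPolynomial.X 1 := by simp [φ, hy]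
      rw [map_add, map_sub, ← Polynomial.aeval_algHom_apply, ← Polynomial.aeval_algHom_apply,
        ← Polynomial.aeval_algHom_apply, map_add, e0, e1] at h1
      exact h1
    have key : ∀ s t : k, p.eval s - p.eval (s + t) + p.eval t = 0 := by
      intro s t
      have h2 := congrArg (MvPolynomial.aeval (![s, t] : Fin 2 → k)) hM
      rw [map_add, map_sub, ← Polynomial.aeval_algHom_apply, ← Polynomial.aeval_algHom_apply,
        ← Polynomial.aeval_algHom_apply, map_add, map_zero] at h2
      simpa using h2
    have h0 : p.eval 0 = 0 := by have := key 0 0; simpa using this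
    have hnat : ∀ n : ℕ, p.eval (n : k) = n * p.eval 1 := by
      intro n
      induction n with
      | zero => simpa using h0
      | succ n ih =>
        have hk := key (n : k) 1
        push_cast
        push_cast at hk
        linear_combination ih - hk
    set a := p.eval 1 with ha
    have hq : p - C a * X = 0 := by
      apply Polynomial.eq_zero_of_infinite_isRoot
      apply Set.Infinite.mono (s := Set.range (Nat.cast : ℕ → k))
      · rintro _ ⟨n, rfl⟩
        simp only [Set.mem_setOf_eq, IsRoot, eval_sub, eval_mul, eval_C, eval_X]
        rw [hnat n]; ring
      · exact Set.infinite_range_of_injective Nat.cast_injective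
    exact ⟨a, by linear_combination (norm := ring_nf) hq⟩
  · rintro ⟨a, rfl⟩
    have hu : ∀ u : FreeAlgebra k (Fin 2), aeval u (C a * X) = algebraMap k _ a * u := by
      intro u; simp
    rw [hu, hu, hu, ← map_sub, ← map_add]
    have : algebraMap k (FreeAlgebra k (Fin 2)) a * x
        - algebraMap k (FreeAlgebra k (Fin 2)) a * (x + y)
        + algebraMap k (FreeAlgebra k (Fin 2)) a * y = 0 := by noncomm_ring
    rw [this, map_zero]
end
end

section
/- Let u and v be derivations of the free Lie algebra lie_n that are tangential, i.e., there are families a_1,…,a_n and b_1,…,b_n of elements of lie_n with u(x_i) = ⁅x_i, a_i⁆ and v(x_i) = ⁅x_i, b_i⁆ for all i. Then the commutator derivation ⁅u, v⁆ is again tangential; explicitly, ⁅u, v⁆(x_i) = ⁅x_i, u(b_i) − v(a_i) + ⁅a_i, b_i⁆⁆ for every i. Hence the tangential derivations form a Lie subalgebra of the derivations of lie_n. -/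
open FreeLieAlgebra

/-- The commutator of two tangential derivations of the free Lie algebra is tangential:
if `u(x_i) = ⁅x_i, a_i⁆` and `v(x_i) = ⁅x_i, b_i⁆`, then
`⁅u, v⁆(x_i) = ⁅x_i, u(b_i) − v(a_i) + ⁅a_i, b_i⁆⁆` for every `i`.  Hence tangential
derivations form a Lie subalgebra of the derivations of `lie_n`. -/
theorem bracket_of_tangential_derivations (k : Type) [Field k] [CharZero k] (n : ℕ)
    (u v : LieDerivation k (FreeLieAlgebra k (Fin n)) (FreeLieAlgebra k (Fin n)))
    (a b : Fin n → FreeLieAlgebra k (Fin n))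
    (hu : ∀ i, u (of k i) = ⁅of k i, a i⁆)
    (hv : ∀ i, v (of k i) = ⁅of k i, b i⁆) :
    ∀ i, ⁅u, v⁆ (of k i) = ⁅of k i, u (b i) - v (a i) + ⁅a i, b i⁆⁆ := by
  intro i
  rw [LieDerivation.lie_apply, hu, hv, LieDerivation.apply_lie_eq_add,
    LieDerivation.apply_lie_eq_add, hu, hv, lie_add, lie_sub, lie_lie,
    ← lie_skew (⁅of k i, b i⁆) (a i)]
  abel
end

section
/- Let x_i be a generator of the free Lie algebra lie_n over a field k of characteristic zero, and let a ∈ lie_n satisfy ⁅x_i, a⁆ = 0. Then a is a scalar multiple of x_i: there exists c ∈ k with a = c • x_i. (The kernel of the operator ad_{x_i} on lie_n is exactly k·x_i.) -/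
/-!
Let `D` be the derivation of the free Lie algebra `L` with `D x_j = x_j`; it multiplies a bracket
monomial in `m` letters by `m`, so in characteristic zero it is injective. `D` is built without a
grading: `a ↦ (b ↦ (⁅a, b.1⁆ + b.2 • D a, 0))` is a representation of `L` on `L × k` exactly when
`D` is a derivation, so one prescribes it on generators and reads `D a` off the image of `(0, 1)`.

This representation factors through the free associative algebra `k⟨X⟩`. If `⁅x_i, a⁆ = 0`, the
image of `a` in `k⟨X⟩` commutes with `X_i`, hence is a polynomial in `X_i` (its coefficients are
invariant under rotating words, and vanish on words whose first letter is not `i`). As `X_i ^ 2` kills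
`(0, 1)`, this gives `D a = c • x_i = D (c • x_i)`, and injectivity gives `a = c • x_i`.
-/

open FreeLieAlgebra

attribute [local instance] LieRing.ofAssociativeRing

namespace FreeMonoid

theorem eq_pow_length_of_forall_mem_eq {α : Type*} {x : α} {w : FreeMonoid α}
    (h : ∀ y ∈ w, y = x) : w = of x ^ w.length := by
  induction w using FreeMonoid.inductionOn' with
  | one => rfl
  | of_mul z w ih =>
    calc of z * w = of x * of x ^ w.length := by
          rw [h z (mem_mul.2 (.inl mem_of_self)), ← ih fun y hy => h y (mem_mul.2 (.inr hy))]
      _ = of x ^ (of z * w).length := by rw [length_mul, length_of, add_comm, pow_succ']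

end FreeMonoid

namespace MonoidAlgebra

variable {R X : Type*} [Semiring R] {x : X} {u : MonoidAlgebra R (FreeMonoid X)}

theorem coeff_of_mul_eq_coeff_mul_of_commute (h : Commute (single (FreeMonoid.of x) 1) u)
    (w : FreeMonoid X) : u.coeff (FreeMonoid.of x * w) = u.coeff (w * FreeMonoid.of x) := by
  have := congr(($h.eq).coeff (FreeMonoid.of x * w * FreeMonoid.of x))
  rwa [coeff_mul_single_mul, mul_assoc, coeff_single_mul_mul, one_mul, mul_one, eq_comm] at this

theorem coeff_of_mul_eq_zero_of_commute (h : Commute (single (FreeMonoid.of x) 1) u) {y : X}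
    (hy : y ≠ x) (w : FreeMonoid X) : u.coeff (FreeMonoid.of y * w) = 0 := by
  rw [← mul_one (u.coeff _), ← coeff_mul_single_mul, ← h.eq]
  refine coeff_single_mul_of_forall_mul_ne _ _ fun d hd => hy ?_
  simpa using (congr_arg (List.head? ∘ FreeMonoid.toList) hd).symm

theorem coeff_eq_zero_of_commute (h : Commute (single (FreeMonoid.of x) 1) u) {y : X}
    (hy : y ≠ x) {w : FreeMonoid X} (hyw : y ∈ w) : u.coeff w = 0 := by
  suffices ∀ v, u.coeff (w * v) = 0 by simpa using this 1
  induction w using FreeMonoid.inductionOn' with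
  | one => exact absurd hyw FreeMonoid.notMem_one
  | of_mul z w ih =>
    intro v
    by_cases hz : z = x
    · subst hz
      have hyw : y ∈ w := (FreeMonoid.mem_mul.1 hyw).resolve_left (by simpa using hy)
      rw [mul_assoc, coeff_of_mul_eq_coeff_mul_of_commute h, mul_assoc, ih hyw]
    · rw [mul_assoc, coeff_of_mul_eq_zero_of_commute h hz]

theorem mem_span_pow_of_commute (h : Commute (of R _ (FreeMonoid.of x)) u) :
    u ∈ Submodule.span R (Set.range fun m : ℕ => of R _ (FreeMonoid.of x) ^ m) := by
  rw [← sum_coeff_single u]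
  refine Submodule.finsuppSum_mem _ _ _ _ fun w hw => ?_
  have hw : w = FreeMonoid.of x ^ w.length := FreeMonoid.eq_pow_length_of_forall_mem_eq
    fun y hy => by_contra fun hyx => hw (coeff_eq_zero_of_commute h hyx hy)
  have : single w (u.coeff w) = u.coeff w • of R _ (FreeMonoid.of x) ^ w.length := by
    rw [← map_pow, of_apply, ← hw, smul_single, smul_eq_mul, mul_one]
  exact this ▸ Submodule.smul_mem _ _ (Submodule.subset_span ⟨_, rfl⟩)

end MonoidAlgebra

namespace FreeLieAlgebra

variable (R : Type*) [CommRing R] {X : Type*}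

theorem lieSpan_range_of :
    LieSubalgebra.lieSpan R (FreeLieAlgebra R X) (Set.range (of R)) = ⊤ := by
  set S := LieSubalgebra.lieSpan R (FreeLieAlgebra R X) (Set.range (of R))
  have hS : S.incl.comp (lift R fun x => ⟨of R x, LieSubalgebra.subset_lieSpan ⟨x, rfl⟩⟩) =
      LieHom.id := hom_ext fun x => by simp
  refine eq_top_iff.2 fun a _ => ?_
  rw [show a = (LieHom.id : FreeLieAlgebra R X →ₗ⁅R⁆ _) a from rfl, ← hS]
  exact Subtype.coe_prop _

variable {R}

noncomputable def derivationRep (f : X → FreeLieAlgebra R X) :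
    FreeLieAlgebra R X →ₗ⁅R⁆ Module.End R (FreeLieAlgebra R X × R) :=
  lift R fun x => LinearMap.inl R _ R ∘ₗ
    (LieAlgebra.ad R _ (of R x) ∘ₗ LinearMap.fst R _ R + (LinearMap.snd R _ R).smulRight (f x))

theorem derivationRep_of_apply (f : X → FreeLieAlgebra R X) (x : X)
    (p : FreeLieAlgebra R X × R) :
    derivationRep f (of R x) p = (⁅of R x, p.1⁆ + p.2 • f x, 0) := by
  simp [derivationRep]

theorem derivationRep_apply (f : X → FreeLieAlgebra R X) (a : FreeLieAlgebra R X)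
    (p : FreeLieAlgebra R X × R) :
    derivationRep f a p = (⁅a, p.1⁆ + p.2 • (derivationRep f a (0, 1)).1, 0) := by
  have ha : a ∈ LieSubalgebra.lieSpan R _ (Set.range (of R)) := lieSpan_range_of R ▸ trivial
  induction ha using LieSubalgebra.lieSpan_induction generalizing p with
  | mem _ hx =>
    obtain ⟨x, rfl⟩ := hx
    simp [derivationRep_of_apply]
  | zero => simp [Prod.ext_iff]
  | add a b _ _ iha ihb =>
    set Da := (derivationRep f a (0, 1)).1
    set Db := (derivationRep f b (0, 1)).1
    simp only [map_add, LinearMap.add_apply, iha, ihb, Prod.mk_add_mk, add_zero, add_lie,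
      lie_zero, one_smul, zero_add, smul_add, Prod.mk.injEq, and_true]
    abel
  | smul t a _ iha =>
    set Da := (derivationRep f a (0, 1)).1
    simp only [map_smul, LinearMap.smul_apply, iha]
    simp [smul_lie, smul_comm t]
  | lie a b _ _ iha ihb =>
    set Da := (derivationRep f a (0, 1)).1
    set Db := (derivationRep f b (0, 1)).1
    simp only [LieHom.map_lie, Ring.lie_def, LinearMap.sub_apply, Module.End.mul_apply, iha, ihb,
      lie_add, lie_smul, zero_smul, add_zero, Prod.mk_sub_mk, sub_self, lie_lie, lie_zero,
      one_smul, zero_add, smul_sub, Prod.mk.injEq, and_true]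
    abel

noncomputable def liftDerivation (f : X → FreeLieAlgebra R X) :
    LieDerivation R (FreeLieAlgebra R X) (FreeLieAlgebra R X) where
  toLinearMap := LinearMap.fst R _ R ∘ₗ LinearMap.applyₗ (0, 1) ∘ₗ (derivationRep f).toLinearMap
  leibniz' a b := by
    simp only [LinearMap.coe_comp, Function.comp_apply, LinearMap.applyₗ_apply_apply,
      LieHom.coe_toLinearMap, LieHom.map_lie, Ring.lie_def, LinearMap.sub_apply,
      Module.End.mul_apply]
    rw [derivationRep_apply f b (0, 1), derivationRep_apply f a (0, 1)]
    simp [derivationRep_apply f a (_, 0), derivationRep_apply f b (_, 0)]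

theorem liftDerivation_apply (f : X → FreeLieAlgebra R X) (a : FreeLieAlgebra R X) :
    liftDerivation f a = (derivationRep f a (0, 1)).1 := rfl

theorem liftDerivation_of (f : X → FreeLieAlgebra R X) (x : X) :
    liftDerivation f (of R x) = f x := by
  simp [liftDerivation_apply, derivationRep_of_apply]

variable (R) in
noncomputable def lieMonomial (w : FreeMagma X) : FreeLieAlgebra R X := mk R (.single w 1)

theorem lieMonomial_of (x : X) : lieMonomial R (FreeMagma.of x) = of R x := rfl

theorem lieMonomial_mul (u v : FreeMagma X) :
    lieMonomial R (u * v) = ⁅lieMonomial R u, lieMonomial R v⁆ := by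
  rw [lieMonomial, ← one_mul (1 : R), ← MonoidAlgebra.single_mul_single]
  exact map_mul (mk R) _ _

theorem mk_single (w : FreeMagma X) (r : R) :
    (mk R (.single w r) : FreeLieAlgebra R X) = r • lieMonomial R w := by
  have : (.single w r : FreeNonUnitalNonAssocAlgebra R X) = r • .single w 1 := by
    rw [MonoidAlgebra.smul_single, smul_eq_mul, mul_one]
  rw [lieMonomial, this]
  exact map_smul (mk R) r (MonoidAlgebra.single w 1 : FreeNonUnitalNonAssocAlgebra R X)

variable (R X) in
noncomputable def degreeDerivation : LieDerivation R (FreeLieAlgebra R X) (FreeLieAlgebra R X) :=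
  liftDerivation (of R)

theorem degreeDerivation_of (x : X) : degreeDerivation R X (of R x) = of R x :=
  liftDerivation_of _ x

theorem degreeDerivation_lieMonomial (w : FreeMagma X) :
    degreeDerivation R X (lieMonomial R w) = (w.length : R) • lieMonomial R w := by
  induction w with
  | ih1 x => rw [lieMonomial_of, degreeDerivation_of, FreeMagma.length, Nat.cast_one, one_smul]
  | ih2 u v ihu ihv =>
    rw [lieMonomial_mul, LieDerivation.apply_lie_eq_add, ihu, ihv, lie_smul, smul_lie]
    simp [FreeMagma.length, add_smul, add_comm]

theorem degreeDerivation_injective {K : Type*} [Field K] [CharZero K] :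
    Function.Injective (degreeDerivation K X) := by
  set D : Module.End K (FreeLieAlgebra K X) := ↑(degreeDerivation K X)
  have hspan : ⨆ (μ : K) (_ : μ ≠ 0), D.eigenspace μ = ⊤ := by
    rw [eq_top_iff]
    rintro a -
    obtain ⟨ℓ, rfl⟩ := Quot.exists_rep a
    induction ℓ using MonoidAlgebra.induction_linear with
    | zero => exact zero_mem _
    | add ℓ ℓ' h h' => exact add_mem h h'
    | single w r =>
      refine (le_iSup₂_of_le (w.length : K) (by exact_mod_cast w.length_pos.ne') le_rfl :
        D.eigenspace _ ≤ _) ?_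
      rw [show Quot.mk _ _ = (mk K (.single w r) : FreeLieAlgebra K X) from rfl, mk_single]
      exact Submodule.smul_mem _ _
        (Module.End.mem_eigenspace_iff.2 (degreeDerivation_lieMonomial w))
  have hker := Module.End.eigenspaces_iSupIndep D 0
  rw [hspan, disjoint_top, Module.End.eigenspace_zero] at hker
  exact LinearMap.ker_eq_bot.1 hker

theorem apply_mem_span_pow_of_lie_eq_zero {A : Type*} [Ring A] [Algebra R A]
    (F : FreeLieAlgebra R X →ₗ⁅R⁆ A) {x : X} {a : FreeLieAlgebra R X} (h : ⁅of R x, a⁆ = 0) :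
    F a ∈ Submodule.span R (Set.range fun m : ℕ => F (of R x) ^ m) := by
  let ι : FreeLieAlgebra R X →ₗ⁅R⁆ MonoidAlgebra R (FreeMonoid X) :=
    lift R fun x => MonoidAlgebra.of R _ (FreeMonoid.of x)
  let G : MonoidAlgebra R (FreeMonoid X) →ₐ[R] A :=
    MonoidAlgebra.lift R A _ (FreeMonoid.lift (F ∘ of R))
  have hF : F = G.toLieHom.comp ι := hom_ext fun y => by simp [ι, G]
  have hcomm : Commute (MonoidAlgebra.of R _ (FreeMonoid.of x)) (ι a) := by
    have := congr(ι $h)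
    rwa [LieHom.map_lie, map_zero, Ring.lie_def, sub_eq_zero, lift_of_apply] at this
  have hG : ⇑G.toLinearMap ∘ (fun m : ℕ => MonoidAlgebra.of R _ (FreeMonoid.of x) ^ m) =
      fun m => F (of R x) ^ m := by
    funext m; simp [G]
  have := Submodule.mem_map_of_mem (f := G.toLinearMap)
    (MonoidAlgebra.mem_span_pow_of_commute hcomm)
  rwa [Submodule.map_span, ← Set.range_comp, hG, AlgHom.toLinearMap_apply,
    ← AlgHom.toLieHom_apply, ← LieHom.comp_apply, ← hF] at this

theorem degreeDerivation_mem_span_of_lie_eq_zero {x : X} {a : FreeLieAlgebra R X}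
    (h : ⁅of R x, a⁆ = 0) : degreeDerivation R X a ∈ R ∙ of R x := by
  let ev : Module.End R (FreeLieAlgebra R X × R) →ₗ[R] FreeLieAlgebra R X :=
    LinearMap.fst R _ R ∘ₗ LinearMap.applyₗ (0, 1)
  have hD : degreeDerivation R X a = ev (derivationRep (of R) a) := rfl
  have := Submodule.mem_map_of_mem (f := ev)
    (apply_mem_span_pow_of_lie_eq_zero (derivationRep (of R)) h)
  rw [Submodule.map_span, ← hD] at this
  refine Submodule.span_le.2 ?_ this
  rintro _ ⟨_, ⟨m, rfl⟩, rfl⟩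
  rcases m with _ | _ | m
  · simp [ev]
  · simp [ev, derivationRep_of_apply, Submodule.mem_span_singleton_self]
  · simp [ev, pow_succ, derivationRep_of_apply, Prod.mk_zero_zero]

end FreeLieAlgebra

/-- The kernel of `ad_{x_i}` on the free Lie algebra `lie_n` is exactly `k·x_i`:
if `⁅x_i, a⁆ = 0` then `a` is a scalar multiple of the generator `x_i`. -/
theorem ker_ad_generator (k : Type) [Field k] [CharZero k] (n : ℕ) (i : Fin n)
    (a : FreeLieAlgebra k (Fin n)) (h : ⁅of k i, a⁆ = 0) :
    ∃ c : k, a = c • of k i := by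
  obtain ⟨c, hc⟩ := Submodule.mem_span_singleton.1 (degreeDerivation_mem_span_of_lie_eq_zero h)
  refine ⟨c, degreeDerivation_injective ?_⟩
  rw [map_smul, degreeDerivation_of, hc]
end

section
/- For distinct indices i, j ∈ {1,…,n}, let t^{i,j} = t^{j,i} be the derivation of the free Lie algebra lie_n determined by t^{i,j}(x_i) = ⁅x_i, x_j⁆, t^{i,j}(x_j) = ⁅x_j, x_i⁆, and t^{i,j}(x_m) = 0 for m ∉ {i, j}. Then these derivations satisfy the infinitesimal braid (Drinfeld–Kohno) relations: ⁅t^{i,j}, t^{k,l}⁆ = 0 whenever {i,j} and {k,l} are disjoint, and ⁅t^{i,j} + t^{i,k}, t^{j,k}⁆ = 0 for all triples of distinct indices i, j, k. -/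
open FreeLieAlgebra

lemma lieSpan_range_of_eq_top (k : Type) [Field k] (X : Type) :
    LieSubalgebra.lieSpan k (FreeLieAlgebra k X) (Set.range (of k)) = ⊤ := by
  set S := LieSubalgebra.lieSpan k (FreeLieAlgebra k X) (Set.range (of k)) with hS
  rw [eq_top_iff]
  intro z _
  let f : X → S := fun x => ⟨of k x, LieSubalgebra.subset_lieSpan ⟨x, rfl⟩⟩
  let F : FreeLieAlgebra k X →ₗ⁅k⁆ S := lift k f
  have h : S.incl.comp F = LieHom.id := by
    apply hom_ext
    intro x
    simp [F, f, lift_of_apply]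
  have : S.incl (F z) = z := by
    have := congrArg (fun G => G z) h
    simpa using this
  rw [← this]
  exact (F z).2

lemma deriv_ext (k : Type) [Field k] (X : Type)
    (D1 D2 : LieDerivation k (FreeLieAlgebra k X) (FreeLieAlgebra k X))
    (h : ∀ x, D1 (of k x) = D2 (of k x)) : D1 = D2 :=
  LieDerivation.ext_of_lieSpan_eq_top _ (lieSpan_range_of_eq_top k X)
    (fun _ ⟨x, hx⟩ => hx ▸ h x)

/-- The derivations `t^{i,j}` of the free Lie algebra `lie_n` (determined by
`t^{i,j}(x_i) = ⁅x_i, x_j⁆`, `t^{i,j}(x_j) = ⁅x_j, x_i⁆`, `t^{i,j}(x_m) = 0` otherwise)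
satisfy the infinitesimal braid (Drinfeld–Kohno) relations:
`⁅t^{i,j}, t^{k,l}⁆ = 0` for disjoint pairs, and `⁅t^{i,j} + t^{i,k}, t^{j,k}⁆ = 0`
for distinct `i, j, k`. -/
theorem infinitesimal_braid_relations (k : Type) [Field k] [CharZero k] (n : ℕ)
    (t : Fin n → Fin n → LieDerivation k (FreeLieAlgebra k (Fin n)) (FreeLieAlgebra k (Fin n)))
    (h1 : ∀ i j, i ≠ j → t i j (of k i) = ⁅of k i, of k j⁆)
    (h2 : ∀ i j, i ≠ j → t i j (of k j) = ⁅of k j, of k i⁆)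
    (h3 : ∀ i j m, i ≠ j → m ≠ i → m ≠ j → t i j (of k m) = 0) :
    (∀ i j a b, i ≠ j → a ≠ b → a ≠ i → a ≠ j → b ≠ i → b ≠ j → ⁅t i j, t a b⁆ = 0) ∧
    (∀ i j m, i ≠ j → i ≠ m → j ≠ m → ⁅t i j + t i m, t j m⁆ = 0) := by
  constructor
  · intro i j a b hij hab hai haj hbi hbj
    apply deriv_ext
    intro x
    rw [LieDerivation.commutator_apply]
    simp only [LieDerivation.coe_zero, Pi.zero_apply]  -- rhs
    by_cases hxi : x = i
    · subst hxi
      rw [h3 a b x hab hai.symm hbi.symm, h1 x j hij, map_zero,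
        LieDerivation.apply_lie_eq_add, h3 a b x hab hai.symm hbi.symm,
        h3 a b j hab haj.symm hbj.symm]
      simp
    by_cases hxj : x = j
    · subst hxj
      rw [h3 a b x hab haj.symm hbj.symm, h2 i x hij, map_zero,
        LieDerivation.apply_lie_eq_add, h3 a b x hab haj.symm hbj.symm,
        h3 a b i hab hai.symm hbi.symm]
      simp
    by_cases hxa : x = a
    · subst hxa
      rw [h3 i j x hij hxi hxj, h1 x b hab, map_zero,
        LieDerivation.apply_lie_eq_add, h3 i j x hij hxi hxj,
        h3 i j b hij hbi hbj]
      simp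
    by_cases hxb : x = b
    · subst hxb
      rw [h3 i j x hij hxi hxj, h2 a x hab, map_zero,
        LieDerivation.apply_lie_eq_add, h3 i j x hij hxi hxj,
        h3 i j a hij hai haj]
      simp
    · rw [h3 i j x hij hxi hxj, h3 a b x hab hxa hxb]
      simp
  · intro i j m hij him hjm
    apply deriv_ext
    intro x
    rw [LieDerivation.commutator_apply]
    simp only [LieDerivation.coe_zero, Pi.zero_apply, LieDerivation.coe_add, Pi.add_apply,
      map_add]
    by_cases hxi : x = i
    · subst hxi
      rw [h3 j m x hjm hij him, map_zero, map_zero,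
        h1 x j hij, h1 x m him,
        LieDerivation.apply_lie_eq_add, LieDerivation.apply_lie_eq_add,
        h3 j m x hjm hij him,
        h2 j m hjm, h1 j m hjm]
      rw [← lie_skew (of k m) (of k j)]
      simp
    by_cases hxj : x = j
    · subst hxj
      rw [h2 i x hij, h3 i m x him hij.symm hjm, h1 x m hjm,
        LieDerivation.apply_lie_eq_add, LieDerivation.apply_lie_eq_add,
        LieDerivation.apply_lie_eq_add,
        h2 i x hij, h3 i m x him hij.symm hjm, h1 x m hjm,
        h3 i x m hij him.symm hjm.symm, h2 i m him,
        h3 x m i hjm hij him]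
      simp only [lie_zero, zero_lie, map_zero, add_zero, zero_add]
      rw [leibniz_lie (of k x) (of k m) (of k i),
        ← lie_skew ⁅of k x, of k i⁆ (of k m)]
      abel
    by_cases hxm : x = m
    · subst hxm
      rw [h3 i j x hij hxi hxj, h2 i x him, h2 j x hjm,
        LieDerivation.apply_lie_eq_add, LieDerivation.apply_lie_eq_add,
        LieDerivation.apply_lie_eq_add,
        h3 i j x hij hxi hxj, h2 i x him, h2 j x hjm,
        h2 i j hij, h3 i x j him hij.symm hjm, h3 j x i hjm hij him]
      simp only [lie_zero, zero_lie, map_zero, add_zero, zero_add]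
      rw [leibniz_lie (of k x) (of k j) (of k i),
        ← lie_skew ⁅of k x, of k i⁆ (of k j)]
      abel
    · rw [h3 i j x hij hxi hxj, h3 i m x him hxi hxm, h3 j m x hjm hxj hxm]
      simp
end

section
/- Let θ: lie_2 → lie_3 be the Lie algebra homomorphism sending x ↦ x + y and y ↦ z. Let u, v be tangential derivations of lie_2 with u(x) = ⁅x, a_1⁆, u(y) = ⁅y, b_1⁆, v(x) = ⁅x, a_2⁆, v(y) = ⁅y, b_2⁆ for elements a_1, b_1, a_2, b_2 ∈ lie_2, and let U, V be the derivations of lie_3 (the coproduct images u^{12,3}, v^{12,3}) determined by U(x) = ⁅x, θ(a_1)⁆, U(y) = ⁅y, θ(a_1)⁆, U(z) = ⁅z, θ(b_1)⁆ and V(x) = ⁅x, θ(a_2)⁆, V(y) = ⁅y, θ(a_2)⁆, V(z) = ⁅z, θ(b_2)⁆. Then ⁅U, V⁆(x) = ⁅x, θ(u(a_2) − v(a_1) + ⁅a_1, a_2⁆)⁆, ⁅U, V⁆(y) = ⁅y, θ(u(a_2) − v(a_1) + ⁅a_1, a_2⁆)⁆, and ⁅U, V⁆(z) = ⁅z, θ(u(b_2)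 − v(b_1) + ⁅b_1, b_2⁆)⁆; that is, the coproduct map is a Lie algebra homomorphism: [u^{12,3}, v^{12,3}] = [u,v]^{12,3}. -/
/-! Both `w ↦ U (θ w)` and `w ↦ θ (u w)` are `θ`-derivations `lie_2 → lie_3`, and they agree on
`x` and `y` (for `x` because `θ x = x + y` and `U` acts on `x` and `y` by the same `θ a₁`), hence
everywhere: `U ∘ θ = θ ∘ u`. On a generator `g` with `U g = ⁅g, A⁆`, `V g = ⁅g, B⁆` the Jacobi
identity gives `⁅U, V⁆ g = ⁅g, U B - V A + ⁅A, B⁆⁆`, and the intertwining turns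
`U (θ a₂) - V (θ a₁)` into `θ (u a₂ - v a₁)`. -/

open FreeLieAlgebra

noncomputable section

/-- The coproduct homomorphism `θ : lie_2 → lie_3`, `x ↦ x + y`, `y ↦ z`. -/
def theta (k : Type) [Field k] :
    FreeLieAlgebra k (Fin 2) →ₗ⁅k⁆ FreeLieAlgebra k (Fin 3) :=
  FreeLieAlgebra.lift k ![of k (0 : Fin 3) + of k (1 : Fin 3), of k (2 : Fin 3)]

theorem FreeLieAlgebra.lieSpan_range_of_s10 (R X : Type*) [CommRing R] :
    LieSubalgebra.lieSpan R (FreeLieAlgebra R X) (Set.range (of R)) = ⊤ := by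
  set S := LieSubalgebra.lieSpan R (FreeLieAlgebra R X) (Set.range (of R))
  have hincl : S.incl.comp (lift R fun x => (⟨of R x, LieSubalgebra.subset_lieSpan ⟨x, rfl⟩⟩ : S)) =
      LieHom.id := hom_ext fun x => by simp
  refine eq_top_iff.mpr fun w _ => ?_
  rw [← LieHom.id_apply (R := R) w, ← hincl]
  exact Subtype.property _

theorem LieDerivation.apply_lieHom_eqOn_lieSpan {R L M : Type*} [CommRing R] [LieRing L]
    [LieAlgebra R L] [LieRing M] [LieAlgebra R M] (θ : L →ₗ⁅R⁆ M) (u : LieDerivation R L L)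
    (U : LieDerivation R M M) {s : Set L}
    (h : ∀ x ∈ s, U (θ x) = θ (u x)) {w : L} (hw : w ∈ LieSubalgebra.lieSpan R L s) :
    U (θ w) = θ (u w) := by
  induction hw using LieSubalgebra.lieSpan_induction with
  | mem x hx => exact h x hx
  | zero => simp
  | add x y _ _ hx hy => simp only [map_add, hx, hy]
  | smul t x _ hx => simp only [map_smul, hx]
  | lie x y _ _ hx hy =>
    simp only [LieHom.map_lie, LieDerivation.apply_lie_eq_add, map_add, hx, hy]

theorem LieDerivation.apply_lieHom_of_free {R X M : Type*} [CommRing R] [LieRing M]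
    [LieAlgebra R M] (θ : FreeLieAlgebra R X →ₗ⁅R⁆ M)
    (u : LieDerivation R (FreeLieAlgebra R X) (FreeLieAlgebra R X)) (U : LieDerivation R M M)
    (h : ∀ i, U (θ (of R i)) = θ (u (of R i))) (w : FreeLieAlgebra R X) :
    U (θ w) = θ (u w) :=
  apply_lieHom_eqOn_lieSpan θ u U (by rintro _ ⟨i, rfl⟩; exact h i)
    (lieSpan_range_of_s10 R X ▸ LieSubalgebra.mem_top w)

theorem LieDerivation.lie_apply_of_apply_eq_lie {R L : Type*} [CommRing R] [LieRing L]
    [LieAlgebra R L] {U V : LieDerivation R L L} {g A B : L}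
    (hU : U g = ⁅g, A⁆) (hV : V g = ⁅g, B⁆) :
    ⁅U, V⁆ g = ⁅g, U B - V A + ⁅A, B⁆⁆ := by
  have jacobi : ⁅⁅g, A⁆, B⁆ - ⁅⁅g, B⁆, A⁆ = ⁅g, ⁅A, B⁆⁆ := by
    rw [lie_lie g A B, ← lie_skew A ⁅g, B⁆]
    abel
  rw [commutator_apply, hU, hV, apply_lie_eq_add, apply_lie_eq_add, hU, hV, lie_add, lie_sub,
    ← jacobi]
  abel

theorem theta_of_zero (k : Type) [Field k] :
    theta k (of k 0) = of k (0 : Fin 3) + of k (1 : Fin 3) :=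
  lift_of_apply _ _

theorem theta_of_one (k : Type) [Field k] : theta k (of k 1) = of k (2 : Fin 3) :=
  lift_of_apply _ _

theorem apply_theta_of_tangential {k : Type} [Field k]
    {u : LieDerivation k (FreeLieAlgebra k (Fin 2)) (FreeLieAlgebra k (Fin 2))}
    {U : LieDerivation k (FreeLieAlgebra k (Fin 3)) (FreeLieAlgebra k (Fin 3))}
    {a b : FreeLieAlgebra k (Fin 2)}
    (hux : u (of k (0 : Fin 2)) = ⁅of k (0 : Fin 2), a⁆)
    (huy : u (of k (1 : Fin 2)) = ⁅of k (1 : Fin 2), b⁆)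
    (hUx : U (of k (0 : Fin 3)) = ⁅of k (0 : Fin 3), theta k a⁆)
    (hUy : U (of k (1 : Fin 3)) = ⁅of k (1 : Fin 3), theta k a⁆)
    (hUz : U (of k (2 : Fin 3)) = ⁅of k (2 : Fin 3), theta k b⁆) (w : FreeLieAlgebra k (Fin 2)) :
    U (theta k w) = theta k (u w) := by
  refine LieDerivation.apply_lieHom_of_free (theta k) u U (Fin.forall_fin_two.mpr ⟨?_, ?_⟩) w
  · simp only [hux, LieHom.map_lie, theta_of_zero, map_add, hUx, hUy, add_lie]
  · simp only [huy, LieHom.map_lie, theta_of_one, hUz]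

theorem coproduct_is_hom_general (k : Type) [Field k]
    (u v : LieDerivation k (FreeLieAlgebra k (Fin 2)) (FreeLieAlgebra k (Fin 2)))
    (U V : LieDerivation k (FreeLieAlgebra k (Fin 3)) (FreeLieAlgebra k (Fin 3)))
    (a₁ b₁ a₂ b₂ : FreeLieAlgebra k (Fin 2))
    (hux : u (of k (0 : Fin 2)) = ⁅of k (0 : Fin 2), a₁⁆)
    (huy : u (of k (1 : Fin 2)) = ⁅of k (1 : Fin 2), b₁⁆)
    (hvx : v (of k (0 : Fin 2)) = ⁅of k (0 : Fin 2), a₂⁆)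
    (hvy : v (of k (1 : Fin 2)) = ⁅of k (1 : Fin 2), b₂⁆)
    (hUx : U (of k (0 : Fin 3)) = ⁅of k (0 : Fin 3), theta k a₁⁆)
    (hUy : U (of k (1 : Fin 3)) = ⁅of k (1 : Fin 3), theta k a₁⁆)
    (hUz : U (of k (2 : Fin 3)) = ⁅of k (2 : Fin 3), theta k b₁⁆)
    (hVx : V (of k (0 : Fin 3)) = ⁅of k (0 : Fin 3), theta k a₂⁆)
    (hVy : V (of k (1 : Fin 3)) = ⁅of k (1 : Fin 3), theta k a₂⁆)
    (hVz : V (of k (2 : Fin 3)) = ⁅of k (2 : Fin 3), theta k b₂⁆) :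
    ⁅U, V⁆ (of k (0 : Fin 3)) = ⁅of k (0 : Fin 3), theta k (u a₂ - v a₁ + ⁅a₁, a₂⁆)⁆ ∧
    ⁅U, V⁆ (of k (1 : Fin 3)) = ⁅of k (1 : Fin 3), theta k (u a₂ - v a₁ + ⁅a₁, a₂⁆)⁆ ∧
    ⁅U, V⁆ (of k (2 : Fin 3)) = ⁅of k (2 : Fin 3), theta k (u b₂ - v b₁ + ⁅b₁, b₂⁆)⁆ := by
  have hU := apply_theta_of_tangential hux huy hUx hUy hUz
  have hV := apply_theta_of_tangential hvx hvy hVx hVy hVz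
  simp only [map_add, map_sub, LieHom.map_lie, ← hU, ← hV]
  exact ⟨LieDerivation.lie_apply_of_apply_eq_lie hUx hVx,
    LieDerivation.lie_apply_of_apply_eq_lie hUy hVy, LieDerivation.lie_apply_of_apply_eq_lie hUz hVz⟩

/-- The coproduct map on tangential derivations is a Lie algebra homomorphism:
`[u^{12,3}, v^{12,3}] = [u,v]^{12,3}`, computed on the generators `x, y, z`. -/
theorem coproduct_is_hom (k : Type) [Field k] [CharZero k]
    (u v : LieDerivation k (FreeLieAlgebra k (Fin 2)) (FreeLieAlgebra k (Fin 2)))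
    (U V : LieDerivation k (FreeLieAlgebra k (Fin 3)) (FreeLieAlgebra k (Fin 3)))
    (a₁ b₁ a₂ b₂ : FreeLieAlgebra k (Fin 2))
    (hux : u (of k (0 : Fin 2)) = ⁅of k (0 : Fin 2), a₁⁆)
    (huy : u (of k (1 : Fin 2)) = ⁅of k (1 : Fin 2), b₁⁆)
    (hvx : v (of k (0 : Fin 2)) = ⁅of k (0 : Fin 2), a₂⁆)
    (hvy : v (of k (1 : Fin 2)) = ⁅of k (1 : Fin 2), b₂⁆)
    (hUx : U (of k (0 : Fin 3)) = ⁅of k (0 : Fin 3), theta k a₁⁆)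
    (hUy : U (of k (1 : Fin 3)) = ⁅of k (1 : Fin 3), theta k a₁⁆)
    (hUz : U (of k (2 : Fin 3)) = ⁅of k (2 : Fin 3), theta k b₁⁆)
    (hVx : V (of k (0 : Fin 3)) = ⁅of k (0 : Fin 3), theta k a₂⁆)
    (hVy : V (of k (1 : Fin 3)) = ⁅of k (1 : Fin 3), theta k a₂⁆)
    (hVz : V (of k (2 : Fin 3)) = ⁅of k (2 : Fin 3), theta k b₂⁆) :
    ⁅U, V⁆ (of k (0 : Fin 3)) = ⁅of k (0 : Fin 3), theta k (u a₂ - v a₁ + ⁅a₁, a₂⁆)⁆ ∧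
    ⁅U, V⁆ (of k (1 : Fin 3)) = ⁅of k (1 : Fin 3), theta k (u a₂ - v a₁ + ⁅a₁, a₂⁆)⁆ ∧
    ⁅U, V⁆ (of k (2 : Fin 3)) = ⁅of k (2 : Fin 3), theta k (u b₂ - v b₁ + ⁅b₁, b₂⁆)⁆ :=
  coproduct_is_hom_general k u v U V a₁ b₁ a₂ b₂ hux huy hvx hvy hUx hUy hUz hVx hVy hVz
end
end

section
/- Let a, b ∈ lie_2 (the free Lie algebra on generators x, y) satisfy the following three equations in lie_3 (generators x, y, z): (i) −a(x+y,z) + a(x,y+z) − a(x,y) = 0; (ii) a(y,z) − a(x+y,z) + b(x,y+z) − b(x,y) = 0; (iii) b(y,z) − b(x+y,z) + b(x,y+z) = 0. Then there exist scalars α, β ∈ k such that a = α • y and b = β • x. (Equivalently, the kernel of the differential d: dert_2 → dert_3 on tangential derivations is two-dimensional, spanned by r = (y,0) and t = (y,x), so H²(dert, d) = k·r ⊕ k·t.) -/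
open FreeLieAlgebra

/-!
Substituting `x ↦ 0, y ↦ x, z ↦ y` in (i) and `x ↦ x, y ↦ y, z ↦ 0` in (iii) leaves `a`
(resp. `b`) itself next to evaluations of `a` (resp. `b`) at a pair with one entry zero.
Such an evaluation `f(0, w)` only sees the linear part of `f`: both generators land on the
line `k w`, which is an abelian Lie subalgebra, so `f(0, w) = f(0, 1) • w` with `f(0, 1)`
computed in `k` viewed as an abelian Lie algebra. Hence `a = α • y` and `b = β • x`.
-/

-- A commutative ring is thereby an abelian Lie algebra over itself.
attribute [local instance] LieRing.ofAssociativeRing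

namespace FreeLieAlgebra

variable {R ι L L' : Type*} [CommRing R] [LieRing L] [LieAlgebra R L]
  [LieRing L'] [LieAlgebra R L']

theorem apply_lift_apply (F : L →ₗ⁅R⁆ L') (f : ι → L) (a : FreeLieAlgebra R ι) :
    F (lift R f a) = lift R (F ∘ f) a := by
  rw [← (lift_unique (F ∘ f) (F.comp (lift R f))).mp (by ext; simp)]
  rfl

theorem apply_lift_vec_apply (F : L →ₗ⁅R⁆ L') (u v : L) (a : FreeLieAlgebra R (Fin 2)) :
    F (lift R ![u, v] a) = lift R ![F u, F v] a := by
  rw [apply_lift_apply]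
  congr 2
  ext i; fin_cases i <;> rfl

theorem lift_of_zero_one (a : FreeLieAlgebra R (Fin 2)) :
    lift R ![of R 0, of R 1] a = a := by
  have h : ![of R 0, of R 1] = (LieHom.id : FreeLieAlgebra R (Fin 2) →ₗ⁅R⁆ _) ∘ of R := by
    ext i; fin_cases i <;> rfl
  rw [h, lift_comp_of]
  rfl

def smulRightHom (w : L) : R →ₗ⁅R⁆ L :=
  { LinearMap.toSpanSingleton R L w with
    map_lie' := by
      intro s t
      simp [LinearMap.toSpanSingleton_apply, Ring.lie_def, mul_comm] }

@[simp]
theorem smulRightHom_apply (w : L) (t : R) : smulRightHom w t = t • w := rfl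

theorem lift_zero_vec_apply (w : L) (a : FreeLieAlgebra R (Fin 2)) :
    lift R ![0, w] a = lift R ![(0 : R), 1] a • w := by
  simpa using (apply_lift_vec_apply (smulRightHom w) 0 1 a).symm

theorem lift_vec_zero_apply (w : L) (a : FreeLieAlgebra R (Fin 2)) :
    lift R ![w, 0] a = lift R ![(1 : R), 0] a • w := by
  simpa using (apply_lift_vec_apply (smulRightHom w) 1 0 a).symm

theorem eq_smul_y_of_first_equation (a : FreeLieAlgebra R (Fin 2))
    (h : -(lift R ![of R (0 : Fin 3) + of R 1, of R 2] a)
        + lift R ![of R (0 : Fin 3), of R 1 + of R 2] a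
        - lift R ![of R (0 : Fin 3), of R 1] a = 0) :
    a = lift R ![(0 : R), 1] a • of R 1 := by
  have H := congrArg (lift R ![0, of R (0 : Fin 2), of R 1]) h
  simp only [map_sub, map_add, map_neg, map_zero, apply_lift_vec_apply, lift_of_apply,
    Matrix.cons_val, zero_add] at H
  rw [lift_of_zero_one, lift_zero_vec_apply (of R 0 + of R 1), lift_zero_vec_apply (of R 0)] at H
  linear_combination (norm := module) -H

theorem eq_smul_x_of_third_equation (b : FreeLieAlgebra R (Fin 2))
    (h : lift R ![of R (1 : Fin 3), of R 2] b
        - lift R ![of R (0 : Fin 3) + of R 1, of R 2] b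
        + lift R ![of R (0 : Fin 3), of R 1 + of R 2] b = 0) :
    b = lift R ![(1 : R), 0] b • of R 0 := by
  have H := congrArg (lift R ![of R (0 : Fin 2), of R 1, 0]) h
  simp only [map_sub, map_add, map_zero, apply_lift_vec_apply, lift_of_apply,
    Matrix.cons_val, add_zero] at H
  rw [lift_of_zero_one, lift_vec_zero_apply (of R 1), lift_vec_zero_apply (of R 0 + of R 1)] at H
  linear_combination (norm := module) H

end FreeLieAlgebra

theorem kernel_of_d_dert2_general (k : Type) [Field k]
    (a b : FreeLieAlgebra k (Fin 2))
    (h1 : -(lift k ![of k (0 : Fin 3) + of k (1 : Fin 3), of k (2 : Fin 3)] a)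
        + lift k ![of k (0 : Fin 3), of k (1 : Fin 3) + of k (2 : Fin 3)] a
        - lift k ![of k (0 : Fin 3), of k (1 : Fin 3)] a = 0)
    (h3 : lift k ![of k (1 : Fin 3), of k (2 : Fin 3)] b
        - lift k ![of k (0 : Fin 3) + of k (1 : Fin 3), of k (2 : Fin 3)] b
        + lift k ![of k (0 : Fin 3), of k (1 : Fin 3) + of k (2 : Fin 3)] b = 0) :
    ∃ α β : k, a = α • of k (1 : Fin 2) ∧ b = β • of k (0 : Fin 2) :=
  ⟨_, _, eq_smul_y_of_first_equation a h1, eq_smul_x_of_third_equation b h3⟩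

/-- `H²(dert, d) = k·r ⊕ k·t`: if the tangential derivation `u = (a, b)` of `lie_2`
satisfies `d u = 0`, i.e. the three displayed equations in `lie_3` hold, then
`a = α • y` and `b = β • x` for some scalars `α, β`. -/
theorem kernel_of_d_dert2 (k : Type) [Field k] [CharZero k]
    (a b : FreeLieAlgebra k (Fin 2))
    (h1 : -(lift k ![of k (0 : Fin 3) + of k (1 : Fin 3), of k (2 : Fin 3)] a)
        + lift k ![of k (0 : Fin 3), of k (1 : Fin 3) + of k (2 : Fin 3)] a
        - lift k ![of k (0 : Fin 3), of k (1 : Fin 3)] a = 0)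
    (h2 : lift k ![of k (1 : Fin 3), of k (2 : Fin 3)] a
        - lift k ![of k (0 : Fin 3) + of k (1 : Fin 3), of k (2 : Fin 3)] a
        + lift k ![of k (0 : Fin 3), of k (1 : Fin 3) + of k (2 : Fin 3)] b
        - lift k ![of k (0 : Fin 3), of k (1 : Fin 3)] b = 0)
    (h3 : lift k ![of k (1 : Fin 3), of k (2 : Fin 3)] b
        - lift k ![of k (0 : Fin 3) + of k (1 : Fin 3), of k (2 : Fin 3)] b
        + lift k ![of k (0 : Fin 3), of k (1 : Fin 3) + of k (2 : Fin 3)] b = 0) :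
    ∃ α β : k, a = α • of k (1 : Fin 2) ∧ b = β • of k (0 : Fin 2) :=
  kernel_of_d_dert2_general k a b h1 h3
end
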